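/- Let μ > 0, λ > 0, τ > 0, N ≥ 1, and let u⁰, …, u^N and w⁰, …, w^N be periodic grid functions satisfying the nonlinear compact difference scheme: (i) w^q_p = (δ_xx u^q)_p − (h²/12)(δ_xx w^q)_p for all 0 ≤ q ≤ N and p ∈ ℤ; (ii) for all 1 ≤ q ≤ N and p ∈ ℤ, with ū^q = (u^q + u^{q−1})/2 and w̄^q = (w^q + w^{q−1})/2: (u^q_p − u^{q−1}_p)/τ − μ·(w^q_p − w^{q−1}_p)/τ + Ψ(ū^q, ū^q)_p − (h²/2)·Ψ(w̄^q, ū^q)_p + (Δ_x ū^q)_p − (h²/6)·(Δ_x w̄^q)_p − λ·w̄^q_p = 0. Then for every 0 ≤ q ≤ N, ‖u^q‖² ≤ ‖u⁰‖² + μ·( |u⁰|_1² + (h²/12)‖w⁰‖² − (h⁴/144)|w⁰|_1² ); in particular the numerical solution is bounded in the discrete L² norm uniformly in q. -/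

import Mathlib

open Finset

/-- A periodic grid function with period `M`. -/
def Periodic (M : ℕ) (w : ℤ → ℝ) : Prop := ∀ p : ℤ, w (p + (M : ℤ)) = w p

/-- Discrete inner product `⟨v,w⟩ = h ∑_{p=1}^M v_p w_p`. -/
noncomputable def ip (M : ℕ) (h : ℝ) (v w : ℤ → ℝ) : ℝ :=
  h * ∑ p ∈ Finset.Icc (1 : ℤ) (M : ℤ), v p * w p

/-- Discrete L² norm `‖w‖ = √⟨w,w⟩`. -/
noncomputable def nrm (M : ℕ) (h : ℝ) (w : ℤ → ℝ) : ℝ := Real.sqrt (ip M h w w)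

/-- Discrete H¹ seminorm `|w|₁`. -/
noncomputable def snorm1 (M : ℕ) (h : ℝ) (w : ℤ → ℝ) : ℝ :=
  Real.sqrt (h * ∑ p ∈ Finset.Icc (1 : ℤ) (M : ℤ), ((w p - w (p - 1)) / h) ^ 2)

/-- Centered difference operator `(Δ_x w)_p = (w_{p+1} − w_{p−1})/(2h)`. -/
noncomputable def Dx (h : ℝ) (w : ℤ → ℝ) : ℤ → ℝ :=
  fun p => (w (p + 1) - w (p - 1)) / (2 * h)

/-- Second difference operator `(δ_xx w)_p = (w_{p+1} − 2w_p + w_{p−1})/h²`. -/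
noncomputable def Dxx (h : ℝ) (w : ℤ → ℝ) : ℤ → ℝ :=
  fun p => (w (p + 1) - 2 * w p + w (p - 1)) / h ^ 2

/-- Discrete nonlinear operator `Ψ(v,w)_p = (1/3)(v_p (Δ_x w)_p + (Δ_x (vw))_p)`. -/
noncomputable def Psi (h : ℝ) (v w : ℤ → ℝ) : ℤ → ℝ :=
  fun p => (1 / 3) * (v p * Dx h w p + Dx h (fun q => v q * w q) p)

noncomputable def sip (M : ℕ) (h : ℝ) (v w : ℤ → ℝ) : ℝ :=
  h * ∑ p ∈ Finset.Icc (1 : ℤ) (M : ℤ), ((v p - v (p - 1)) / h) * ((w p - w (p - 1)) / h)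

lemma sum_shift_up (M : ℕ) (hM : 1 ≤ M) (f : ℤ → ℝ) (hf : ∀ p : ℤ, f (p + (M : ℤ)) = f p) :
    ∑ p ∈ Finset.Icc (1 : ℤ) (M : ℤ), f (p + 1) = ∑ p ∈ Finset.Icc (1 : ℤ) (M : ℤ), f p := by
  have h1 : ∑ p ∈ Finset.Icc (1 : ℤ) (M : ℤ), f (p + 1)
      = ∑ p ∈ Finset.Icc (2 : ℤ) ((M : ℤ) + 1), f p := by
    rw [show (2 : ℤ) = 1 + 1 by ring, ← Finset.map_add_right_Icc, Finset.sum_map]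
    rfl
  have hM' : (1 : ℤ) ≤ (M : ℤ) := by exact_mod_cast hM
  have e1 : Finset.Icc (2 : ℤ) ((M : ℤ) + 1) = insert ((M : ℤ) + 1) (Finset.Icc (2 : ℤ) (M : ℤ)) := by
    ext q; simp [Finset.mem_Icc]; omega
  have e2 : Finset.Icc (1 : ℤ) (M : ℤ) = insert (1 : ℤ) (Finset.Icc (2 : ℤ) (M : ℤ)) := by
    ext q; simp [Finset.mem_Icc]; omega
  have n1 : ((M : ℤ) + 1) ∉ Finset.Icc (2 : ℤ) (M : ℤ) := by simp [Finset.mem_Icc]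
  have n2 : (1 : ℤ) ∉ Finset.Icc (2 : ℤ) (M : ℤ) := by simp [Finset.mem_Icc]
  rw [h1, e1, e2, Finset.sum_insert n1, Finset.sum_insert n2]
  rw [show (M : ℤ) + 1 = 1 + (M : ℤ) by ring, hf 1]

lemma sum_shift_down (M : ℕ) (hM : 1 ≤ M) (f : ℤ → ℝ) (hf : ∀ p : ℤ, f (p + (M : ℤ)) = f p) :
    ∑ p ∈ Finset.Icc (1 : ℤ) (M : ℤ), f (p - 1) = ∑ p ∈ Finset.Icc (1 : ℤ) (M : ℤ), f p := by
  have := sum_shift_up M hM (fun p => f (p - 1)) (fun p => by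
    rw [show p + (M : ℤ) - 1 = (p - 1) + (M : ℤ) by ring, hf])
  simp only [add_sub_cancel_right] at this
  exact this.symm

lemma ip_comm (M : ℕ) (h : ℝ) (v w : ℤ → ℝ) : ip M h v w = ip M h w v := by
  unfold ip; congr 1; exact Finset.sum_congr rfl fun p _ => mul_comm _ _

lemma sip_comm (M : ℕ) (h : ℝ) (v w : ℤ → ℝ) : sip M h v w = sip M h w v := by
  unfold sip; congr 1; exact Finset.sum_congr rfl fun p _ => mul_comm _ _

lemma ip_congr_left (M : ℕ) (h : ℝ) {v v' : ℤ → ℝ} (w : ℤ → ℝ) (e : ∀ p, v p = v' p) :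
    ip M h v w = ip M h v' w := by
  unfold ip; congr 1; exact Finset.sum_congr rfl fun p _ => by rw [e p]

lemma ip_sub_left (M : ℕ) (h : ℝ) (v v' w : ℤ → ℝ) :
    ip M h (fun p => v p - v' p) w = ip M h v w - ip M h v' w := by
  unfold ip; rw [← mul_sub, ← Finset.sum_sub_distrib]
  congr 1; exact Finset.sum_congr rfl fun p _ => by ring

lemma ip_add_left (M : ℕ) (h : ℝ) (v v' w : ℤ → ℝ) :
    ip M h (fun p => v p + v' p) w = ip M h v w + ip M h v' w := by
  unfold ip; rw [← mul_add, ← Finset.sum_add_distrib]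
  congr 1; exact Finset.sum_congr rfl fun p _ => by ring

lemma ip_smul_left (M : ℕ) (h : ℝ) (c : ℝ) (v w : ℤ → ℝ) :
    ip M h (fun p => c * v p) w = c * ip M h v w := by
  unfold ip; rw [Finset.mul_sum, Finset.mul_sum, Finset.mul_sum]
  exact Finset.sum_congr rfl fun p _ => by ring

lemma ip_nonneg (M : ℕ) (h : ℝ) (hh : 0 ≤ h) (w : ℤ → ℝ) : 0 ≤ ip M h w w := by
  unfold ip
  exact mul_nonneg hh (Finset.sum_nonneg fun p _ => mul_self_nonneg _)

lemma sip_nonneg (M : ℕ) (h : ℝ) (hh : 0 ≤ h) (w : ℤ → ℝ) : 0 ≤ sip M h w w := by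
  unfold sip
  exact mul_nonneg hh (Finset.sum_nonneg fun p _ => mul_self_nonneg _)

-- Periodicity closure
lemma Periodic.Dx' {M : ℕ} {h : ℝ} {f : ℤ → ℝ} (hf : Periodic M f) : Periodic M (Dx h f) := by
  intro p; unfold Dx
  rw [show p + (M : ℤ) + 1 = (p + 1) + (M : ℤ) by ring,
      show p + (M : ℤ) - 1 = (p - 1) + (M : ℤ) by ring, hf, hf]

lemma Periodic.Dxx' {M : ℕ} {h : ℝ} {f : ℤ → ℝ} (hf : Periodic M f) : Periodic M (Dxx h f) := by
  intro p; unfold Dxx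
  rw [show p + (M : ℤ) + 1 = (p + 1) + (M : ℤ) by ring,
      show p + (M : ℤ) - 1 = (p - 1) + (M : ℤ) by ring, hf, hf, hf]

lemma Periodic.mul' {M : ℕ} {f g : ℤ → ℝ} (hf : Periodic M f) (hg : Periodic M g) :
    Periodic M (fun p => f p * g p) := fun p => by simp only [hf p, hg p]

lemma Periodic.avg {M : ℕ} {f g : ℤ → ℝ} (hf : Periodic M f) (hg : Periodic M g) :
    Periodic M (fun p => (f p + g p) / 2) := fun p => by simp only [hf p, hg p]

-- summation by parts for Dx
lemma ip_Dx_skew (M : ℕ) (hM : 1 ≤ M) (h : ℝ) {a b : ℤ → ℝ}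
    (ha : Periodic M a) (hb : Periodic M b) :
    ip M h (Dx h a) b = - ip M h a (Dx h b) := by
  unfold ip Dx
  have s1 : ∑ p ∈ Finset.Icc (1 : ℤ) (M : ℤ), a (p + 1) * b p
      = ∑ p ∈ Finset.Icc (1 : ℤ) (M : ℤ), a p * b (p - 1) := by
    have := sum_shift_down M hM (fun p => a (p + 1) * b p)
      (fun p => by rw [show p + (M:ℤ) + 1 = (p+1)+(M:ℤ) by ring, ha, hb])
    rw [← this]
    exact Finset.sum_congr rfl fun p _ => by
      show a (p - 1 + 1) * b (p - 1) = _
      rw [show p - 1 + 1 = p by ring]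
  have s2 : ∑ p ∈ Finset.Icc (1 : ℤ) (M : ℤ), a (p - 1) * b p
      = ∑ p ∈ Finset.Icc (1 : ℤ) (M : ℤ), a p * b (p + 1) := by
    have := sum_shift_up M hM (fun p => a (p - 1) * b p)
      (fun p => by rw [show p + (M:ℤ) - 1 = (p-1)+(M:ℤ) by ring, ha, hb])
    rw [← this]
    exact Finset.sum_congr rfl fun p _ => by
      show a (p + 1 - 1) * b (p + 1) = _
      rw [show p + 1 - 1 = p by ring]
  have expand1 : ∑ p ∈ Finset.Icc (1 : ℤ) (M : ℤ), (a (p + 1) - a (p - 1)) / (2 * h) * b p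
      = (∑ p ∈ Finset.Icc (1 : ℤ) (M : ℤ), a (p + 1) * b p
        - ∑ p ∈ Finset.Icc (1 : ℤ) (M : ℤ), a (p - 1) * b p) / (2 * h) := by
    rw [← Finset.sum_sub_distrib, Finset.sum_div]
    exact Finset.sum_congr rfl fun p _ => by ring
  have expand2 : ∑ p ∈ Finset.Icc (1 : ℤ) (M : ℤ), a p * ((b (p + 1) - b (p - 1)) / (2 * h))
      = (∑ p ∈ Finset.Icc (1 : ℤ) (M : ℤ), a p * b (p + 1)
        - ∑ p ∈ Finset.Icc (1 : ℤ) (M : ℤ), a p * b (p - 1)) / (2 * h) := by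
    rw [← Finset.sum_sub_distrib, Finset.sum_div]
    exact Finset.sum_congr rfl fun p _ => by ring
  rw [expand1, expand2, s1, s2]
  ring

lemma ip_Dx_self (M : ℕ) (hM : 1 ≤ M) (h : ℝ) {a : ℤ → ℝ} (ha : Periodic M a) :
    ip M h (Dx h a) a = 0 := by
  have h1 := ip_Dx_skew M hM h ha ha
  have h2 : ip M h a (Dx h a) = ip M h (Dx h a) a := ip_comm M h a (Dx h a)
  linarith [h1, h2.symm ▸ h1]

lemma ip_Dxx_eq_neg_sip (M : ℕ) (hM : 1 ≤ M) (h : ℝ) {a b : ℤ → ℝ}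
    (ha : Periodic M a) (hb : Periodic M b) :
    ip M h (Dxx h a) b = - sip M h a b := by
  unfold ip Dxx sip
  have s1 : ∑ p ∈ Finset.Icc (1 : ℤ) (M : ℤ), (a (p + 1) - a p) * b p
      = ∑ p ∈ Finset.Icc (1 : ℤ) (M : ℤ), (a p - a (p - 1)) * b (p - 1) := by
    have := sum_shift_down M hM (fun p => (a (p + 1) - a p) * b p)
      (fun p => by rw [show p + (M:ℤ) + 1 = (p+1)+(M:ℤ) by ring, ha, ha, hb])
    rw [← this]
    exact Finset.sum_congr rfl fun p _ => by
      show (a (p - 1 + 1) - a (p - 1)) * b (p - 1) = _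
      rw [show p - 1 + 1 = p by ring]
  have expand : ∑ p ∈ Finset.Icc (1 : ℤ) (M : ℤ), (a (p + 1) - 2 * a p + a (p - 1)) / h ^ 2 * b p
      = (∑ p ∈ Finset.Icc (1 : ℤ) (M : ℤ), (a (p + 1) - a p) * b p
        - ∑ p ∈ Finset.Icc (1 : ℤ) (M : ℤ), (a p - a (p - 1)) * b p) / h ^ 2 := by
    rw [← Finset.sum_sub_distrib, Finset.sum_div]
    exact Finset.sum_congr rfl fun p _ => by ring
  rw [expand, s1]
  have merge : (∑ p ∈ Finset.Icc (1 : ℤ) (M : ℤ), (a p - a (p - 1)) * b (p - 1)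
        - ∑ p ∈ Finset.Icc (1 : ℤ) (M : ℤ), (a p - a (p - 1)) * b p) / h ^ 2
      = ∑ p ∈ Finset.Icc (1 : ℤ) (M : ℤ),
          ((a p - a (p - 1)) * b (p - 1) - (a p - a (p - 1)) * b p) / h ^ 2 := by
    rw [← Finset.sum_sub_distrib, Finset.sum_div]
  rw [merge]
  have final : ∑ p ∈ Finset.Icc (1 : ℤ) (M : ℤ),
          ((a p - a (p - 1)) * b (p - 1) - (a p - a (p - 1)) * b p) / h ^ 2
      = ∑ p ∈ Finset.Icc (1 : ℤ) (M : ℤ),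
          -((a p - a (p - 1)) / h * ((b p - b (p - 1)) / h)) := by
    exact Finset.sum_congr rfl fun p _ => by ring
  rw [final, Finset.sum_neg_distrib]
  ring

lemma Dx_Dxx_comm (h : ℝ) (f : ℤ → ℝ) (p : ℤ) : Dx h (Dxx h f) p = Dxx h (Dx h f) p := by
  unfold Dx Dxx
  rw [show p + 1 + 1 = p + 2 by ring, show p + 1 - 1 = p by ring,
      show p - 1 + 1 = p by ring, show p - 1 - 1 = p - 2 by ring]
  ring

lemma psi_orth (M : ℕ) (hM : 1 ≤ M) (h : ℝ) {v w : ℤ → ℝ}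
    (hv : Periodic M v) (hw : Periodic M w) :
    ip M h (Psi h v w) w = 0 := by
  have e : ∀ p, Psi h v w p
      = (1/3 : ℝ) * ((fun q => v q * Dx h w q) p + Dx h (fun q => v q * w q) p) := fun p => rfl
  rw [ip_congr_left M h w e]
  have hsplit : ip M h (fun p => (1/3 : ℝ) * ((fun q => v q * Dx h w q) p + Dx h (fun q => v q * w q) p)) w
      = (1/3 : ℝ) * (ip M h (fun q => v q * Dx h w q) w + ip M h (Dx h (fun q => v q * w q)) w) := by
    rw [← ip_add_left, ← ip_smul_left]
  rw [hsplit]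
  have h1 : ip M h (Dx h (fun q => v q * w q)) w = - ip M h (fun q => v q * w q) (Dx h w) :=
    ip_Dx_skew M hM h (hv.mul' hw) hw
  have h2 : ip M h (fun q => v q * Dx h w q) w = ip M h (fun q => v q * w q) (Dx h w) := by
    unfold ip; congr 1; exact Finset.sum_congr rfl fun p _ => by ring
  rw [h1, h2]; ring

lemma inv_ineq (M : ℕ) (hM : 1 ≤ M) (h : ℝ) (hh : 0 < h) {w : ℤ → ℝ} (hw : Periodic M w) :
    sip M h w w ≤ 4 / h ^ 2 * ip M h w w := by
  unfold sip ip
  have key : ∑ p ∈ Finset.Icc (1 : ℤ) (M : ℤ), (w p - w (p - 1)) / h * ((w p - w (p - 1)) / h)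
      ≤ ∑ p ∈ Finset.Icc (1 : ℤ) (M : ℤ),
          (2 * (w p * w p) + 2 * (w (p - 1) * w (p - 1))) / h ^ 2 := by
    apply Finset.sum_le_sum
    intro p _
    rw [show (w p - w (p-1)) / h * ((w p - w (p-1)) / h)
        = (w p - w (p-1)) * (w p - w (p-1)) / h ^ 2 by ring]
    gcongr
    nlinarith [sq_nonneg (w p + w (p - 1))]
  calc h * ∑ p ∈ Finset.Icc (1 : ℤ) (M : ℤ), (w p - w (p - 1)) / h * ((w p - w (p - 1)) / h)
      ≤ h * ∑ p ∈ Finset.Icc (1 : ℤ) (M : ℤ),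
          (2 * (w p * w p) + 2 * (w (p - 1) * w (p - 1))) / h ^ 2 :=
        mul_le_mul_of_nonneg_left key hh.le
    _ = 4 / h ^ 2 * (h * ∑ p ∈ Finset.Icc (1 : ℤ) (M : ℤ), w p * w p) := by
        have e1 : ∑ p ∈ Finset.Icc (1 : ℤ) (M : ℤ),
              (2 * (w p * w p) + 2 * (w (p - 1) * w (p - 1))) / h ^ 2
            = ∑ p ∈ Finset.Icc (1 : ℤ) (M : ℤ), 2 * (w p * w p) / h ^ 2
              + ∑ p ∈ Finset.Icc (1 : ℤ) (M : ℤ), 2 * (w (p - 1) * w (p - 1)) / h ^ 2 := by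
          rw [← Finset.sum_add_distrib]
          exact Finset.sum_congr rfl fun p _ => by ring
        have e2 : ∑ p ∈ Finset.Icc (1 : ℤ) (M : ℤ), 2 * (w (p - 1) * w (p - 1)) / h ^ 2
            = ∑ p ∈ Finset.Icc (1 : ℤ) (M : ℤ), 2 * (w p * w p) / h ^ 2 :=
          sum_shift_down M hM (fun p => 2 * (w p * w p) / h ^ 2) (fun p => by
            show 2 * (w (p + (M : ℤ)) * w (p + (M : ℤ))) / h ^ 2 = _
            rw [hw])
        have e3 : ∑ p ∈ Finset.Icc (1 : ℤ) (M : ℤ), 2 * (w p * w p) / h ^ 2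
            = 2 / h ^ 2 * ∑ p ∈ Finset.Icc (1 : ℤ) (M : ℤ), w p * w p := by
          rw [Finset.mul_sum]
          exact Finset.sum_congr rfl fun p _ => by ring
        rw [e1, e2, e3]
        ring

lemma ip_congr_right (M : ℕ) (h : ℝ) (v : ℤ → ℝ) {w w' : ℤ → ℝ} (e : ∀ p, w p = w' p) :
    ip M h v w = ip M h v w' := by
  unfold ip; congr 1; exact Finset.sum_congr rfl fun p _ => by rw [e p]

lemma ip_add_right (M : ℕ) (h : ℝ) (v w w' : ℤ → ℝ) :
    ip M h v (fun p => w p + w' p) = ip M h v w + ip M h v w' := by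
  rw [ip_comm, ip_add_left, ip_comm M h w v, ip_comm M h w' v]

lemma ip_smul_right (M : ℕ) (h : ℝ) (c : ℝ) (v w : ℤ → ℝ) :
    ip M h v (fun p => c * w p) = c * ip M h v w := by
  rw [ip_comm, ip_smul_left, ip_comm M h w v]

lemma ip_Dxx_symm (M : ℕ) (hM : 1 ≤ M) (h : ℝ) {a b : ℤ → ℝ}
    (ha : Periodic M a) (hb : Periodic M b) :
    ip M h (Dxx h a) b = ip M h a (Dxx h b) := by
  rw [ip_Dxx_eq_neg_sip M hM h ha hb, ip_comm, ip_Dxx_eq_neg_sip M hM h hb ha, sip_comm]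

lemma Periodic.addc {M : ℕ} {f g : ℤ → ℝ} (hf : Periodic M f) (hg : Periodic M g) (c : ℝ) :
    Periodic M (fun p => f p + c * g p) := fun p => by simp only [hf p, hg p]

/-- `⟨w,u⟩ = −(|u|₁² + h²/12 ‖w‖² − h⁴/144 |w|₁²)` under the compact relation. -/
lemma rel_ip (M : ℕ) (hM : 1 ≤ M) (h : ℝ) {U W : ℤ → ℝ}
    (hU : Periodic M U) (hW : Periodic M W)
    (R : ∀ p, W p = Dxx h U p - h ^ 2 / 12 * Dxx h W p) :
    ip M h W U
      = -(sip M h U U + h ^ 2 / 12 * ip M h W W - h ^ 4 / 144 * sip M h W W) := by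
  have R' : ∀ p, Dxx h U p = W p + h ^ 2 / 12 * Dxx h W p := fun p => by
    have := R p; linarith
  have e1 : ip M h W U
      = ip M h (Dxx h U) U - h ^ 2 / 12 * ip M h (Dxx h W) U := by
    rw [ip_congr_left M h U R, ip_sub_left, ip_smul_left]
  have e2 : ip M h (Dxx h U) U = - sip M h U U := ip_Dxx_eq_neg_sip M hM h hU hU
  have e3 : ip M h (Dxx h W) U = - sip M h W U := ip_Dxx_eq_neg_sip M hM h hW hU
  have e4 : sip M h W U = - ip M h W W + h ^ 2 / 12 * sip M h W W := by
    have f1 : ip M h (Dxx h U) W = - sip M h U W := ip_Dxx_eq_neg_sip M hM h hU hW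
    have f2 : ip M h (Dxx h U) W
        = ip M h W W + h ^ 2 / 12 * ip M h (Dxx h W) W := by
      rw [ip_congr_left M h W R', ip_add_left, ip_smul_left]
    have f3 : ip M h (Dxx h W) W = - sip M h W W := ip_Dxx_eq_neg_sip M hM h hW hW
    have f4 : sip M h U W = sip M h W U := sip_comm M h U W
    rw [f1, f3] at f2
    linarith
  rw [e1, e2, e3, e4]
  ring

/-- symmetry `⟨W,U'⟩ = ⟨W',U⟩` for two pairs satisfying the compact relation. -/
lemma rel_symm (M : ℕ) (hM : 1 ≤ M) (h : ℝ) {U W U' W' : ℤ → ℝ}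
    (hU : Periodic M U) (hW : Periodic M W) (hU' : Periodic M U') (hW' : Periodic M W')
    (R : ∀ p, W p = Dxx h U p - h ^ 2 / 12 * Dxx h W p)
    (R' : ∀ p, W' p = Dxx h U' p - h ^ 2 / 12 * Dxx h W' p) :
    ip M h W U' = ip M h W' U := by
  have e1 : ip M h W U'
      = ip M h (Dxx h U) U' - h ^ 2 / 12 * ip M h (Dxx h W) U' := by
    rw [ip_congr_left M h U' R, ip_sub_left, ip_smul_left]
  have e1' : ip M h W' U
      = ip M h (Dxx h U') U - h ^ 2 / 12 * ip M h (Dxx h W') U := by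
    rw [ip_congr_left M h U R', ip_sub_left, ip_smul_left]
  rw [ip_Dxx_eq_neg_sip M hM h hU hU', ip_Dxx_eq_neg_sip M hM h hW hU'] at e1
  rw [ip_Dxx_eq_neg_sip M hM h hU' hU, ip_Dxx_eq_neg_sip M hM h hW' hU] at e1'
  have g1 : sip M h U U' = sip M h U' U := sip_comm M h U U'
  have g2 : sip M h W U' = - ip M h W' W + h ^ 2 / 12 * sip M h W' W := by
    have f1 : ip M h (Dxx h U') W = - sip M h U' W := ip_Dxx_eq_neg_sip M hM h hU' hW
    have f2 : ip M h (Dxx h U') W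
        = ip M h W' W + h ^ 2 / 12 * ip M h (Dxx h W') W := by
      have R2 : ∀ p, Dxx h U' p = W' p + h ^ 2 / 12 * Dxx h W' p := fun p => by
        have := R' p; linarith
      rw [ip_congr_left M h W R2, ip_add_left, ip_smul_left]
    have f3 : ip M h (Dxx h W') W = - sip M h W' W := ip_Dxx_eq_neg_sip M hM h hW' hW
    have f4 : sip M h U' W = sip M h W U' := sip_comm M h U' W
    rw [f3] at f2; rw [f4] at f1
    linarith
  have g2' : sip M h W' U = - ip M h W W' + h ^ 2 / 12 * sip M h W W' := by
    have f1 : ip M h (Dxx h U) W' = - sip M h U W' := ip_Dxx_eq_neg_sip M hM h hU hW'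
    have f2 : ip M h (Dxx h U) W'
        = ip M h W W' + h ^ 2 / 12 * ip M h (Dxx h W) W' := by
      have R2 : ∀ p, Dxx h U p = W p + h ^ 2 / 12 * Dxx h W p := fun p => by
        have := R p; linarith
      rw [ip_congr_left M h W' R2, ip_add_left, ip_smul_left]
    have f3 : ip M h (Dxx h W) W' = - sip M h W W' := ip_Dxx_eq_neg_sip M hM h hW hW'
    have f4 : sip M h U W' = sip M h W' U := sip_comm M h U W'
    rw [f3] at f2; rw [f4] at f1
    linarith
  have g3 : ip M h W' W = ip M h W W' := ip_comm M h W' W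
  have g4 : sip M h W' W = sip M h W W' := sip_comm M h W' W
  rw [e1, e1', g1, g2, g2', g3, g4]

/-- `⟨Δ_x W, U⟩ = 0` under the compact relation. -/
lemma rel_DxW_orth (M : ℕ) (hM : 1 ≤ M) (h : ℝ) {U W : ℤ → ℝ}
    (hU : Periodic M U) (hW : Periodic M W)
    (R : ∀ p, W p = Dxx h U p - h ^ 2 / 12 * Dxx h W p) :
    ip M h (Dx h W) U = 0 := by
  have R' : ∀ p, Dxx h U p = W p + h ^ 2 / 12 * Dxx h W p := fun p => by
    have := R p; linarith
  have hDxU : Periodic M (Dx h U) := hU.Dx'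
  have hDxW : Periodic M (Dx h W) := hW.Dx'
  have hDxxU : Periodic M (Dxx h U) := hU.Dxx'
  have hDxxW : Periodic M (Dxx h W) := hW.Dxx'
  -- Z = ip (Dx W) (Dxx W) = 0
  have hZ : ip M h (Dx h W) (Dxx h W) = 0 := by
    have z1 : ip M h (Dx h W) (Dxx h W) = ip M h (Dxx h (Dx h W)) W :=
      (ip_Dxx_symm M hM h hDxW hW).symm
    have z2 : ip M h (Dxx h (Dx h W)) W = ip M h (Dx h (Dxx h W)) W :=
      ip_congr_left M h W (fun p => (Dx_Dxx_comm h W p).symm)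
    have z3 : ip M h (Dx h (Dxx h W)) W = - ip M h (Dxx h W) (Dx h W) :=
      ip_Dx_skew M hM h hDxxW hW
    have z4 : ip M h (Dxx h W) (Dx h W) = ip M h (Dx h W) (Dxx h W) :=
      ip_comm M h (Dxx h W) (Dx h W)
    rw [z2, z3, z4] at z1
    linarith
  -- ip (Dx (Dxx W)) W = 0
  have hDW : ip M h (Dx h (Dxx h W)) W = 0 := by
    have z2 : ip M h (Dx h (Dxx h W)) W = ip M h (Dxx h (Dx h W)) W :=
      ip_congr_left M h W (fun p => Dx_Dxx_comm h W p)
    rw [z2, ip_Dxx_symm M hM h hDxW hW, hZ]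
  -- Y = ip (Dx U) (Dxx W) = 0
  have hY : ip M h (Dx h U) (Dxx h W) = 0 := by
    have y1 : ip M h (Dx h U) (Dxx h W) = ip M h (Dxx h (Dx h U)) W := by
      rw [ip_Dxx_symm M hM h hDxU hW]
    have y2 : ip M h (Dxx h (Dx h U)) W = ip M h (Dx h (Dxx h U)) W :=
      ip_congr_left M h W (fun p => (Dx_Dxx_comm h U p).symm)
    have y3 : ∀ p, Dx h (Dxx h U) p
        = Dx h W p + h ^ 2 / 12 * Dx h (Dxx h W) p := by
      intro p; unfold Dx
      rw [R' (p + 1), R' (p - 1)]; ring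
    have y4 : ip M h (Dx h (Dxx h U)) W
        = ip M h (Dx h W) W + h ^ 2 / 12 * ip M h (Dx h (Dxx h W)) W := by
      rw [ip_congr_left M h W y3, ip_add_left, ip_smul_left]
    rw [y1, y2, y4, ip_Dx_self M hM h hW, hDW]
    ring
  -- B = ip (Dx (Dxx W)) U = 0
  have hB : ip M h (Dx h (Dxx h W)) U = 0 := by
    have b1 : ip M h (Dx h (Dxx h W)) U = ip M h (Dxx h (Dx h W)) U :=
      ip_congr_left M h U (fun p => Dx_Dxx_comm h W p)
    have b2 : ip M h (Dxx h (Dx h W)) U = ip M h (Dx h W) (Dxx h U) :=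
      ip_Dxx_symm M hM h hDxW hU
    have b3 : ip M h (Dx h W) (Dxx h U)
        = ip M h (Dx h W) W + h ^ 2 / 12 * ip M h (Dx h W) (Dxx h W) := by
      rw [ip_congr_right M h (Dx h W) R', ip_add_right, ip_smul_right]
    rw [b1, b2, b3, ip_Dx_self M hM h hW, hZ]
    ring
  -- A = ip (Dx (Dxx U)) U = -X
  have hA : ip M h (Dx h (Dxx h U)) U = - ip M h (Dx h W) U := by
    have a1 : ip M h (Dx h (Dxx h U)) U = ip M h (Dxx h (Dx h U)) U :=
      ip_congr_left M h U (fun p => Dx_Dxx_comm h U p)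
    have a2 : ip M h (Dxx h (Dx h U)) U = ip M h (Dx h U) (Dxx h U) :=
      ip_Dxx_symm M hM h hDxU hU
    have a3 : ip M h (Dx h U) (Dxx h U)
        = ip M h (Dx h U) W + h ^ 2 / 12 * ip M h (Dx h U) (Dxx h W) := by
      rw [ip_congr_right M h (Dx h U) R', ip_add_right, ip_smul_right]
    have a4 : ip M h (Dx h U) W = - ip M h U (Dx h W) := ip_Dx_skew M hM h hU hW
    have a5 : ip M h U (Dx h W) = ip M h (Dx h W) U := ip_comm M h U (Dx h W)
    rw [a1, a2, a3, a4, a5, hY]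
    ring
  -- conclude
  have step1 : ∀ p, Dx h W p = Dx h (Dxx h U) p - h ^ 2 / 12 * Dx h (Dxx h W) p := by
    intro p; unfold Dx
    rw [R (p + 1), R (p - 1)]; ring
  have main : ip M h (Dx h W) U
      = ip M h (Dx h (Dxx h U)) U - h ^ 2 / 12 * ip M h (Dx h (Dxx h W)) U := by
    rw [ip_congr_left M h U step1, ip_sub_left, ip_smul_left]
  rw [hA, hB] at main
  linarith

lemma rel_G_nonneg (M : ℕ) (hM : 1 ≤ M) (h : ℝ) (hh : 0 < h) {U W : ℤ → ℝ}
    (hW : Periodic M W) :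
    0 ≤ sip M h U U + h ^ 2 / 12 * ip M h W W - h ^ 4 / 144 * sip M h W W := by
  have h1 := inv_ineq M hM h hh hW
  have h2 := sip_nonneg M h hh.le U
  have h3 := ip_nonneg M h hh.le W
  have e : h ^ 4 / 144 * (4 / h ^ 2 * ip M h W W) = h ^ 2 / 36 * ip M h W W := by
    field_simp; ring
  have h4 : h ^ 4 / 144 * sip M h W W ≤ h ^ 2 / 36 * ip M h W W := by
    calc h ^ 4 / 144 * sip M h W W
        ≤ h ^ 4 / 144 * (4 / h ^ 2 * ip M h W W) :=
          mul_le_mul_of_nonneg_left h1 (by positivity)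
      _ = h ^ 2 / 36 * ip M h W W := e
  have h5 : h ^ 2 / 36 * ip M h W W ≤ h ^ 2 / 12 * ip M h W W := by
    nlinarith [mul_nonneg (sq_nonneg h) h3]
  linarith

lemma ip_avg_right (M : ℕ) (h : ℝ) (v a b : ℤ → ℝ) :
    ip M h v (fun p => (a p + b p) / 2) = (ip M h v a + ip M h v b) / 2 := by
  unfold ip
  rw [← mul_add, ← Finset.sum_add_distrib, mul_div_assoc, Finset.sum_div]
  congr 1
  exact Finset.sum_congr rfl fun p _ => by ring

lemma energy_step (M : ℕ) (hM : 1 ≤ M) (h : ℝ) (hh : 0 < h)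
    (μ lam τ : ℝ) (hμ : 0 < μ) (hlam : 0 < lam) (hτ : 0 < τ)
    (u0 u1 w0 w1 : ℤ → ℝ)
    (hu0 : Periodic M u0) (hu1 : Periodic M u1)
    (hw0 : Periodic M w0) (hw1 : Periodic M w1)
    (R0 : ∀ p, w0 p = Dxx h u0 p - h ^ 2 / 12 * Dxx h w0 p)
    (R1 : ∀ p, w1 p = Dxx h u1 p - h ^ 2 / 12 * Dxx h w1 p)
    (hs : ∀ p : ℤ,
      (u1 p - u0 p) / τ - μ * ((w1 p - w0 p) / τ)
        + Psi h (fun r => (u1 r + u0 r) / 2) (fun r => (u1 r + u0 r) / 2) p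
        - h ^ 2 / 2 * Psi h (fun r => (w1 r + w0 r) / 2) (fun r => (u1 r + u0 r) / 2) p
        + Dx h (fun r => (u1 r + u0 r) / 2) p
        - h ^ 2 / 6 * Dx h (fun r => (w1 r + w0 r) / 2) p
        - lam * ((w1 p + w0 p) / 2) = 0) :
    ip M h u1 u1 - μ * ip M h w1 u1 ≤ ip M h u0 u0 - μ * ip M h w0 u0 := by
  have hub : Periodic M (fun r => (u1 r + u0 r) / 2) := hu1.avg hu0
  have hwb : Periodic M (fun r => (w1 r + w0 r) / 2) := hw1.avg hw0
  have Rb : ∀ p, (fun r => (w1 r + w0 r) / 2) p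
      = Dxx h (fun r => (u1 r + u0 r) / 2) p
        - h ^ 2 / 12 * Dxx h (fun r => (w1 r + w0 r) / 2) p := by
    intro p
    have e1 := R1 p
    have e0 := R0 p
    simp only [Dxx] at e1 e0 ⊢
    linear_combination e1 / 2 + e0 / 2
  -- normalized scheme
  have hs' : ∀ p : ℤ,
      (1/τ) * (u1 p - u0 p) - (μ/τ) * (w1 p - w0 p)
        + Psi h (fun r => (u1 r + u0 r) / 2) (fun r => (u1 r + u0 r) / 2) p
        - h ^ 2 / 2 * Psi h (fun r => (w1 r + w0 r) / 2) (fun r => (u1 r + u0 r) / 2) p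
        + Dx h (fun r => (u1 r + u0 r) / 2) p
        - h ^ 2 / 6 * Dx h (fun r => (w1 r + w0 r) / 2) p
        - lam * ((fun r => (w1 r + w0 r) / 2) p) = 0 := by
    intro p
    have := hs p
    linear_combination this
  have h0 : ip M h (fun p =>
      (1/τ) * (u1 p - u0 p) - (μ/τ) * (w1 p - w0 p)
        + Psi h (fun r => (u1 r + u0 r) / 2) (fun r => (u1 r + u0 r) / 2) p
        - h ^ 2 / 2 * Psi h (fun r => (w1 r + w0 r) / 2) (fun r => (u1 r + u0 r) / 2) p
        + Dx h (fun r => (u1 r + u0 r) / 2) p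
        - h ^ 2 / 6 * Dx h (fun r => (w1 r + w0 r) / 2) p
        - lam * ((fun r => (w1 r + w0 r) / 2) p)) (fun r => (u1 r + u0 r) / 2) = 0 := by
    rw [ip_congr_left M h _ hs']
    unfold ip
    simp
  rw [ip_sub_left, ip_sub_left, ip_add_left, ip_sub_left, ip_add_left, ip_sub_left,
      ip_smul_left, ip_smul_left, ip_smul_left, ip_smul_left, ip_smul_left,
      ip_sub_left, ip_sub_left] at h0
  rw [psi_orth M hM h hub hub, psi_orth M hM h hwb hub,
      ip_Dx_self M hM h hub, rel_DxW_orth M hM h hub hwb Rb] at h0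
  rw [ip_avg_right M h u1 u1 u0, ip_avg_right M h u0 u1 u0,
      ip_avg_right M h w1 u1 u0, ip_avg_right M h w0 u1 u0] at h0
  have hsym : ip M h w1 u0 = ip M h w0 u1 :=
    rel_symm M hM h hu1 hw1 hu0 hw0 R1 R0
  have hcomm : ip M h u1 u0 = ip M h u0 u1 := ip_comm M h u1 u0
  -- the dissipative term
  have hZ : ip M h (fun r => (w1 r + w0 r) / 2) (fun r => (u1 r + u0 r) / 2) ≤ 0 := by
    have := rel_ip M hM h hub hwb Rb
    have hG := rel_G_nonneg M hM h hh (U := fun r => (u1 r + u0 r) / 2) hwb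
    linarith
  have hlz : lam * ip M h (fun r => (w1 r + w0 r) / 2) (fun r => (u1 r + u0 r) / 2) ≤ 0 :=
    mul_nonpos_of_nonneg_of_nonpos hlam.le hZ
  -- multiply through by τ
  have hτ' : τ ≠ 0 := hτ.ne'
  have key : ip M h u1 u1 - μ * ip M h w1 u1 - (ip M h u0 u0 - μ * ip M h w0 u0)
      = 2 * τ * (lam * ip M h (fun r => (w1 r + w0 r) / 2) (fun r => (u1 r + u0 r) / 2)) := by
    rw [hsym, hcomm] at h0
    field_simp at h0
    linarith
  have : 2 * τ * (lam * ip M h (fun r => (w1 r + w0 r) / 2) (fun r => (u1 r + u0 r) / 2)) ≤ 0 :=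
    mul_nonpos_of_nonneg_of_nonpos (by positivity) hlz
  linarith

lemma nrm_sq (M : ℕ) (h : ℝ) (hh : 0 ≤ h) (f : ℤ → ℝ) : nrm M h f ^ 2 = ip M h f f :=
  Real.sq_sqrt (ip_nonneg M h hh f)

lemma snorm1_sq (M : ℕ) (h : ℝ) (hh : 0 ≤ h) (f : ℤ → ℝ) : snorm1 M h f ^ 2 = sip M h f f := by
  unfold snorm1
  rw [Real.sq_sqrt (by positivity)]
  unfold sip
  congr 1
  exact Finset.sum_congr rfl fun p _ => by ring


/-- uniform discrete L² boundedness of the nonlinear compact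
difference scheme solution. -/
theorem stmt_16 (M : ℕ) (hM : 3 ≤ M) (h : ℝ) (hh : 0 < h) (L : ℝ) (hL : L = M * h)
    (μ lam τ : ℝ) (hμ : 0 < μ) (hlam : 0 < lam) (hτ : 0 < τ)
    (N : ℕ) (hN : 1 ≤ N) (u w : ℕ → ℤ → ℝ)
    (hu : ∀ q ≤ N, Periodic M (u q)) (hw : ∀ q ≤ N, Periodic M (w q))
    (hrel : ∀ q ≤ N, ∀ p : ℤ, w q p = Dxx h (u q) p - h ^ 2 / 12 * Dxx h (w q) p)
    (hscheme : ∀ q, 1 ≤ q → q ≤ N → ∀ p : ℤ,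
      (u q p - u (q - 1) p) / τ - μ * ((w q p - w (q - 1) p) / τ)
        + Psi h (fun r => (u q r + u (q - 1) r) / 2) (fun r => (u q r + u (q - 1) r) / 2) p
        - h ^ 2 / 2 *
            Psi h (fun r => (w q r + w (q - 1) r) / 2) (fun r => (u q r + u (q - 1) r) / 2) p
        + Dx h (fun r => (u q r + u (q - 1) r) / 2) p
        - h ^ 2 / 6 * Dx h (fun r => (w q r + w (q - 1) r) / 2) p
        - lam * ((w q p + w (q - 1) p) / 2) = 0) :
    ∀ q ≤ N,
      (nrm M h (u q)) ^ 2
        ≤ (nrm M h (u 0)) ^ 2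
          + μ * ((snorm1 M h (u 0)) ^ 2 + h ^ 2 / 12 * (nrm M h (w 0)) ^ 2
                  - h ^ 4 / 144 * (snorm1 M h (w 0)) ^ 2) := by
  have hM1 : 1 ≤ M := by omega
  have h0N : 0 ≤ N := Nat.zero_le N
  -- discrete energy decay
  have keyE : ∀ q ≤ N,
      ip M h (u q) (u q) - μ * ip M h (w q) (u q)
        ≤ ip M h (u 0) (u 0) - μ * ip M h (w 0) (u 0) := by
    intro q
    induction q with
    | zero => intro _; exact le_refl _
    | succ n ihn =>
      intro hq1
      have hn : n ≤ N := by omega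
      have hsch : ∀ p : ℤ,
          (u (n+1) p - u n p) / τ - μ * ((w (n+1) p - w n p) / τ)
            + Psi h (fun r => (u (n+1) r + u n r) / 2) (fun r => (u (n+1) r + u n r) / 2) p
            - h ^ 2 / 2 *
                Psi h (fun r => (w (n+1) r + w n r) / 2) (fun r => (u (n+1) r + u n r) / 2) p
            + Dx h (fun r => (u (n+1) r + u n r) / 2) p
            - h ^ 2 / 6 * Dx h (fun r => (w (n+1) r + w n r) / 2) p
            - lam * ((w (n+1) p + w n p) / 2) = 0 := by
        intro p
        have := hscheme (n+1) (by omega) hq1 p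
        simpa only [Nat.add_sub_cancel] using this
      have step := energy_step M hM1 h hh μ lam τ hμ hlam hτ
        (u n) (u (n+1)) (w n) (w (n+1))
        (hu n hn) (hu (n+1) hq1) (hw n hn) (hw (n+1) hq1)
        (hrel n hn) (hrel (n+1) hq1) hsch
      exact le_trans step (ihn hn)
  intro q hq
  have grelq := rel_ip M hM1 h (hu q hq) (hw q hq) (hrel q hq)
  have grel0 := rel_ip M hM1 h (hu 0 h0N) (hw 0 h0N) (hrel 0 h0N)
  have gq := rel_G_nonneg M hM1 h hh (U := u q) (hw q hq)
  rw [nrm_sq M h hh.le, nrm_sq M h hh.le, nrm_sq M h hh.le,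
      snorm1_sq M h hh.le, snorm1_sq M h hh.le]
  have e0 : μ * (sip M h (u 0) (u 0) + h ^ 2 / 12 * ip M h (w 0) (w 0)
        - h ^ 4 / 144 * sip M h (w 0) (w 0)) = -(μ * ip M h (w 0) (u 0)) := by
    rw [grel0]; ring
  have eq1 : μ * (sip M h (u q) (u q) + h ^ 2 / 12 * ip M h (w q) (w q)
        - h ^ 4 / 144 * sip M h (w q) (w q)) = -(μ * ip M h (w q) (u q)) := by
    rw [grelq]; ring
  have hnn : 0 ≤ μ * (sip M h (u q) (u q) + h ^ 2 / 12 * ip M h (w q) (w q)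
        - h ^ 4 / 144 * sip M h (w q) (w q)) := mul_nonneg hμ.le gq
  have := keyE q hq
  linarith
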